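/- Let g : X → ℝ be a measurable function with 0 < inf g and sup g / inf g ≤ δ for some δ ≥ 1. Let w^1,…,w^N ≥ 0 (not all zero) and x^1,…,x^N ∈ X, and set v^i = w^i g(x^i). Then the effective sample size of the updated weights satisfies (Σ_i v^i)² / (Σ_i (v^i)²) ≥ δ^{-2} · (Σ_i w^i)² / (Σ_i (w^i)²). -/
import Mathlib


/-- If the potential `g` satisfies `0 < inf g` and `sup g / inf g ≤ δ`, then
reweighting `v^i = w^i g(x^i)` decreases the effective sample size
`ESS(u) = (Σ_i u^i)² / Σ_i (u^i)²` by a factor of at most `δ²`. -/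
theorem stmt4 {X : Type*} [MeasurableSpace X] (g : X → ℝ) (hg : Measurable g)
    (hbdd : BddAbove (Set.range g)) (δ : ℝ) (hδ : 1 ≤ δ)
    (hinf : 0 < ⨅ x, g x) (hratio : (⨆ x, g x) / (⨅ x, g x) ≤ δ)
    (N : ℕ) (w : Fin N → ℝ) (hw : ∀ i, 0 ≤ w i) (hne : ∃ i, w i ≠ 0)
    (x : Fin N → X) :
    ((∑ i, w i) ^ 2 / ∑ i, (w i) ^ 2) / δ ^ 2 ≤
      (∑ i, w i * g (x i)) ^ 2 / ∑ i, (w i * g (x i)) ^ 2 := by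
  obtain ⟨j, hj⟩ := hne
  have hbB : BddBelow (Set.range g) := by
    by_contra h
    rw [iInf, Real.sInf_of_not_bddBelow h] at hinf
    exact lt_irrefl 0 hinf
  set m := ⨅ x, g x with hm
  set M := ⨆ x, g x with hM
  have hmg : ∀ y, m ≤ g y := fun y => ciInf_le hbB y
  have hgM : ∀ y, g y ≤ M := fun y => le_ciSup hbdd y
  have hmM : m ≤ M := (hmg (x j)).trans (hgM (x j))
  have hMδm : M ≤ δ * m := (div_le_iff₀ hinf).mp hratio
  have hM0 : 0 < M := hinf.trans_le hmM
  have hwj : 0 < w j := (hw j).lt_of_ne (Ne.symm hj)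
  have hSw : 0 < ∑ i, w i :=
    Finset.sum_pos' (fun i _ => hw i) ⟨j, Finset.mem_univ j, hwj⟩
  have hSw2 : 0 < ∑ i, (w i) ^ 2 :=
    Finset.sum_pos' (fun i _ => sq_nonneg _) ⟨j, Finset.mem_univ j, pow_pos hwj 2⟩
  have hnum : m * ∑ i, w i ≤ ∑ i, w i * g (x i) := by
    rw [Finset.mul_sum]
    refine Finset.sum_le_sum fun i _ => ?_
    rw [mul_comm]
    exact mul_le_mul_of_nonneg_left (hmg _) (hw i)
  have hden : ∑ i, (w i * g (x i)) ^ 2 ≤ M ^ 2 * ∑ i, (w i) ^ 2 := by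
    rw [Finset.mul_sum]
    refine Finset.sum_le_sum fun i _ => ?_
    rw [mul_pow, mul_comm (M ^ 2)]
    exact mul_le_mul_of_nonneg_left
      (pow_le_pow_left₀ (hinf.trans_le (hmg _)).le (hgM _) 2) (sq_nonneg _)
  have hSv2 : 0 < ∑ i, (w i * g (x i)) ^ 2 :=
    Finset.sum_pos' (fun i _ => sq_nonneg _)
      ⟨j, Finset.mem_univ j, pow_pos (mul_pos hwj (hinf.trans_le (hmg _))) 2⟩
  have key : (m * ∑ i, w i) ^ 2 / (M ^ 2 * ∑ i, (w i) ^ 2) ≤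
      (∑ i, w i * g (x i)) ^ 2 / ∑ i, (w i * g (x i)) ^ 2 :=
    div_le_div₀ (sq_nonneg _)
      (pow_le_pow_left₀ (mul_nonneg hinf.le hSw.le) hnum 2) hSv2 hden
  refine le_trans ?_ key
  rw [div_div, div_le_div_iff₀ (by positivity) (by positivity)]
  have hM2 : M ^ 2 ≤ δ ^ 2 * m ^ 2 := by nlinarith
  nlinarith [mul_nonneg (mul_nonneg (sq_nonneg (∑ i, w i)) hSw2.le) (sub_nonneg.mpr hM2)]
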